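/- Let d ≥ 1, let l : ℝᵈ → ℝ be differentiable with ‖∇l(x)‖₂ ≤ C_l for all x (C_l > 0), let λ > 0, let g : ℝ → ℝ be continuously differentiable and strictly increasing with g(0) = 0, let 𝒞 > 0 satisfy g(𝒞) = 1/λ, and let C_g > 0 satisfy g′(u) ≤ C_g for all u ∈ [0, 𝒞]. Fix M_c > 0 and M_p > 0, set L_c = min{λ M_c / C_l, M_c / (C_l C_g 𝒞)} and L_p = M_p / C_l, and let p : ℝ → ℝ be continuous with 0 ≤ p(t) ≤ min{L_c, L_p} for all t. Let C ∈ ℝ and define c(x) = ∫_{l(x)}^{l(x)+𝒞} g(t − l(x)) p(t) dt and Ŷ(x) = ∫_{C+𝒞}^{l(x)+𝒞} p(t) dt. Then for all x₁, x₂ ∈ ℝᵈ, both |c(x₁) − c(x₂)| ≤ M_c‖x₁ − x₂‖₂ and |Ŷ(x₁) − Ŷ(x₂)| ≤ M_p‖x₁ − x₂‖₂ hold. -/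

import Mathlib

/-!
Both quantities depend on `x` only through the score `s = l x`, and the gradient bound makes `l`
`C_l`-Lipschitz; so it suffices that, as functions of `s`, the expected outcome is `K`-Lipschitz
and the expected cost `K / λ`-Lipschitz, where `K = min L_c L_p` bounds `p`. The outcome is a
primitive of `p`. For the cost, substituting `t = s + u` gives `∫₀^𝒞 g(u) p(s + u) du`. For
`s₂ ≤ s₁`, integrate `g(u) (p(s₁ + u) - p(s₂ + u))` by parts against
`D(u) = ∫_{s₂+u}^{s₁+u} p ∈ [0, K (s₁ - s₂)]`: as `g` increases from `g 0 = 0` to `g 𝒞 = 1/λ`,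
the boundary term `g(𝒞) D(𝒞)` and `∫₀^𝒞 g' D` both lie in `[0, K (s₁ - s₂) / λ]`.
-/

open MeasureTheory Set intervalIntegral

lemma abs_sub_le_of_norm_gradient_le {F : Type*} [NormedAddCommGroup F] [InnerProductSpace ℝ F]
    [CompleteSpace F] {f : F → ℝ} {C : ℝ} (hf : Differentiable ℝ f)
    (hC : ∀ x, ‖gradient f x‖ ≤ C) (x y : F) : |f x - f y| ≤ C * ‖x - y‖ := by
  have hfderiv : ∀ z ∈ univ, ‖fderiv ℝ f z‖ ≤ C := fun z _ => by simpa [gradient] using hC z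
  simpa [Real.norm_eq_abs] using convex_univ.norm_image_sub_le_of_norm_fderiv_le
    (fun z _ => hf z) hfderiv (mem_univ y) (mem_univ x)

lemma integral_mem_Icc_of_mem_Icc {f : ℝ → ℝ} {a b K : ℝ} (hab : a ≤ b)
    (hf : IntervalIntegrable f volume a b) (hfK : ∀ t ∈ Icc a b, f t ∈ Icc 0 K) :
    ∫ t in a..b, f t ∈ Icc 0 (K * (b - a)) := by
  refine ⟨integral_nonneg hab fun t ht => (hfK t ht).1, ?_⟩
  calc ∫ t in a..b, f t ≤ ∫ _ in a..b, K :=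
        integral_mono_on hab hf intervalIntegrable_const fun t ht => (hfK t ht).2
    _ = K * (b - a) := by rw [intervalIntegral.integral_const, smul_eq_mul, mul_comm]

lemma abs_integral_sub_integral_le {f : ℝ → ℝ} {K : ℝ} (hf : Continuous f)
    (hfK : ∀ t, |f t| ≤ K) (a b₁ b₂ : ℝ) :
    |(∫ t in a..b₁, f t) - ∫ t in a..b₂, f t| ≤ K * |b₁ - b₂| := by
  rw [integral_interval_sub_left (hf.intervalIntegrable a b₁) (hf.intervalIntegrable a b₂)]
  simpa [Real.norm_eq_abs] using norm_integral_le_of_norm_le_const (a := b₂) (b := b₁)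
    (fun t _ => (Real.norm_eq_abs (f t)).trans_le (hfK t))

lemma abs_integral_mul_deriv_le_of_monotone {u v v' : ℝ → ℝ} {a b M : ℝ} (hab : a ≤ b)
    (hu : ContDiff ℝ 1 u) (hmono : Monotone u) (hua : u a = 0)
    (hv : ∀ x ∈ Icc a b, HasDerivAt v (v' x) x) (hv' : IntervalIntegrable v' volume a b)
    (hvM : ∀ x ∈ Icc a b, v x ∈ Icc 0 M) :
    |∫ x in a..b, u x * v' x| ≤ u b * M := by
  have hu_deriv : ∀ x, HasDerivAt u (deriv u x) x :=
    fun x => (hu.differentiable one_ne_zero x).hasDerivAt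
  have hu'_cont : Continuous (deriv u) := hu.continuous_deriv le_rfl
  have hu'_int : IntervalIntegrable (deriv u) volume a b := hu'_cont.intervalIntegrable a b
  have hv_cont : ContinuousOn v (Icc a b) := fun x hx => (hv x hx).continuousAt.continuousWithinAt
  rw [integral_mul_deriv_eq_deriv_mul (fun x _ => hu_deriv x)
    (fun x hx => hv x (by rwa [uIcc_of_le hab] at hx)) hu'_int hv', hua, zero_mul, sub_zero]
  have hub : 0 ≤ u b := hua ▸ hmono hab
  have hvb := hvM b (right_mem_Icc.mpr hab)
  have h_boundary : u b * v b ∈ Icc 0 (u b * M) :=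
    ⟨mul_nonneg hub hvb.1, mul_le_mul_of_nonneg_left hvb.2 hub⟩
  have h_lower : 0 ≤ ∫ x in a..b, deriv u x * v x :=
    integral_nonneg hab fun x hx => mul_nonneg hmono.deriv_nonneg (hvM x hx).1
  have h_upper : ∫ x in a..b, deriv u x * v x ≤ u b * M :=
    calc ∫ x in a..b, deriv u x * v x ≤ ∫ x in a..b, deriv u x * M :=
          integral_mono_on hab ((hu'_cont.continuousOn.mul hv_cont).intervalIntegrable_of_Icc hab)
            (hu'_int.mul_const M)
            fun x hx => mul_le_mul_of_nonneg_left (hvM x hx).2 hmono.deriv_nonneg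
      _ = u b * M := by
          rw [intervalIntegral.integral_mul_const,
            integral_deriv_eq_sub (fun x _ => (hu_deriv x).differentiableAt) hu'_int, hua, sub_zero]
  rw [abs_le]
  constructor <;> linarith [h_boundary.1, h_boundary.2]

lemma integral_mul_comp_sub_self (g p : ℝ → ℝ) (s a : ℝ) :
    ∫ t in s..s + a, g (t - s) * p t = ∫ u in 0..a, g u * p (s + u) := by
  simpa only [add_sub_cancel_left, add_zero] using
    (integral_comp_add_left (fun t => g (t - s) * p t) s (a := 0) (b := a)).symm

lemma abs_integral_mul_comp_add_sub_le {g p : ℝ → ℝ} {a K : ℝ} (ha : 0 ≤ a)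
    (hg : ContDiff ℝ 1 g) (hmono : Monotone g) (hg0 : g 0 = 0)
    (hp : Continuous p) (hpK : ∀ t, p t ∈ Icc 0 K) (s₁ s₂ : ℝ) :
    |(∫ u in 0..a, g u * p (s₁ + u)) - ∫ u in 0..a, g u * p (s₂ + u)| ≤ g a * K * |s₁ - s₂| := by
  wlog hs : s₂ ≤ s₁ generalizing s₁ s₂
  · rw [abs_sub_comm, abs_sub_comm s₁]
    exact this s₂ s₁ (le_of_not_ge hs)
  set P : ℝ → ℝ := fun y => ∫ t in 0..y, p t
  have hP_shift : ∀ s u, HasDerivAt (fun u => P (s + u)) (p (s + u)) u := fun s u =>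
    (hp.integral_hasStrictDerivAt 0 (s + u)).hasDerivAt.comp_const_add s u
  have hp_shift : ∀ s, Continuous fun u => p (s + u) := fun s => hp.comp (continuous_const_add s)
  have hP_diff : ∀ u, P (s₁ + u) - P (s₂ + u) ∈ Icc 0 (K * (s₁ - s₂)) := fun u => by
    rw [integral_interval_sub_left (hp.intervalIntegrable 0 _) (hp.intervalIntegrable 0 _),
      show s₁ - s₂ = (s₁ + u) - (s₂ + u) by ring]
    exact integral_mem_Icc_of_mem_Icc (by linarith) (hp.intervalIntegrable _ _) fun t _ => hpK t
  have hint : ∀ s, IntervalIntegrable (fun u => g u * p (s + u)) volume 0 a :=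
    fun s => (hg.continuous.mul (hp_shift s)).intervalIntegrable 0 a
  rw [← integral_sub (hint s₁) (hint s₂), abs_of_nonneg (sub_nonneg.2 hs)]
  simp_rw [← mul_sub]
  calc _ ≤ g a * (K * (s₁ - s₂)) :=
        abs_integral_mul_deriv_le_of_monotone ha hg hmono hg0
          (fun u _ => (hP_shift s₁ u).sub (hP_shift s₂ u))
          (((hp_shift s₁).sub (hp_shift s₂)).intervalIntegrable 0 a) fun u _ => hP_diff u
    _ = g a * K * (s₁ - s₂) := by ring

theorem randomized_classifier_IF_wrt_BRC_and_outcome_general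
    (d : ℕ)
    (l : EuclideanSpace ℝ (Fin d) → ℝ) (hl_diff : Differentiable ℝ l)
    (C_l : ℝ) (hCl : 0 < C_l) (hl_grad : ∀ x, ‖gradient l x‖ ≤ C_l)
    (lam : ℝ) (hlam : 0 < lam)
    (g : ℝ → ℝ) (hg : ContDiff ℝ 1 g) (hg_mono : StrictMono g) (hg0 : g 0 = 0)
    (𝒞 : ℝ) (h𝒞 : 0 < 𝒞) (hg𝒞 : g 𝒞 = 1 / lam)
    (C_g : ℝ)
    (M_c : ℝ) (M_p : ℝ)
    (L_c : ℝ) (hLc : L_c = min (lam * M_c / C_l) (M_c / (C_l * C_g * 𝒞)))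
    (L_p : ℝ) (hLp : L_p = M_p / C_l)
    (p : ℝ → ℝ) (hp_cont : Continuous p) (hp : ∀ t, 0 ≤ p t ∧ p t ≤ min L_c L_p)
    (C : ℝ)
    (c : EuclideanSpace ℝ (Fin d) → ℝ)
    (hc : ∀ x, c x = ∫ t in (l x)..(l x + 𝒞), g (t - l x) * p t)
    (Yhat : EuclideanSpace ℝ (Fin d) → ℝ)
    (hY : ∀ x, Yhat x = ∫ t in (C + 𝒞)..(l x + 𝒞), p t) :
    ∀ x₁ x₂, |c x₁ - c x₂| ≤ M_c * ‖x₁ - x₂‖ ∧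
      |Yhat x₁ - Yhat x₂| ≤ M_p * ‖x₁ - x₂‖ := by
  intro x₁ x₂
  set K := min L_c L_p
  have hK0 : 0 ≤ K := (hp 0).1.trans (hp 0).2
  have hl_lip : K * |l x₁ - l x₂| ≤ K * (C_l * ‖x₁ - x₂‖) :=
    mul_le_mul_of_nonneg_left (abs_sub_le_of_norm_gradient_le hl_diff hl_grad x₁ x₂) hK0
  constructor
  · have hgK : g 𝒞 * K ≤ M_c / C_l := by
      rw [hg𝒞, one_div, inv_mul_le_iff₀ hlam, ← mul_div_assoc]
      exact (min_le_left _ _).trans (hLc ▸ min_le_left _ _)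
    calc |c x₁ - c x₂| ≤ g 𝒞 * (K * |l x₁ - l x₂|) := by
          rw [hc, hc, integral_mul_comp_sub_self, integral_mul_comp_sub_self, ← mul_assoc]
          exact abs_integral_mul_comp_add_sub_le h𝒞.le hg hg_mono.monotone hg0 hp_cont hp _ _
      _ ≤ g 𝒞 * K * (C_l * ‖x₁ - x₂‖) := by
          rw [mul_assoc]; exact mul_le_mul_of_nonneg_left hl_lip (hg0 ▸ hg_mono.monotone h𝒞.le)
      _ ≤ M_c / C_l * (C_l * ‖x₁ - x₂‖) := mul_le_mul_of_nonneg_right hgK (by positivity)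
      _ = M_c * ‖x₁ - x₂‖ := by field_simp
  · calc |Yhat x₁ - Yhat x₂| ≤ K * |(l x₁ + 𝒞) - (l x₂ + 𝒞)| := by
          rw [hY, hY]
          exact abs_integral_sub_integral_le hp_cont
            (fun t => (abs_of_nonneg (hp t).1).trans_le (hp t).2) _ _ _
      _ ≤ K * (C_l * ‖x₁ - x₂‖) := by rwa [add_sub_add_right_eq_sub]
      _ ≤ M_p / C_l * (C_l * ‖x₁ - x₂‖) :=
          mul_le_mul_of_nonneg_right (hLp ▸ min_le_right _ _) (by positivity)
      _ = M_p * ‖x₁ - x₂‖ := by field_simp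

/-- A randomized threshold classifier whose threshold density is bounded by
`min L_c L_p` simultaneously satisfies individual fairness with respect to the
expected best-response cost (constant `M_c`) and with respect to the expected
outcome (constant `M_p`). -/
theorem randomized_classifier_IF_wrt_BRC_and_outcome
    (d : ℕ) (hd : 1 ≤ d)
    (l : EuclideanSpace ℝ (Fin d) → ℝ) (hl_diff : Differentiable ℝ l)
    (C_l : ℝ) (hCl : 0 < C_l) (hl_grad : ∀ x, ‖gradient l x‖ ≤ C_l)
    (lam : ℝ) (hlam : 0 < lam)
    (g : ℝ → ℝ) (hg : ContDiff ℝ 1 g) (hg_mono : StrictMono g) (hg0 : g 0 = 0)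
    (𝒞 : ℝ) (h𝒞 : 0 < 𝒞) (hg𝒞 : g 𝒞 = 1 / lam)
    (C_g : ℝ) (hCg : 0 < C_g) (hg' : ∀ u ∈ Set.Icc (0 : ℝ) 𝒞, deriv g u ≤ C_g)
    (M_c : ℝ) (hMc : 0 < M_c) (M_p : ℝ) (hMp : 0 < M_p)
    (L_c : ℝ) (hLc : L_c = min (lam * M_c / C_l) (M_c / (C_l * C_g * 𝒞)))
    (L_p : ℝ) (hLp : L_p = M_p / C_l)
    (p : ℝ → ℝ) (hp_cont : Continuous p) (hp : ∀ t, 0 ≤ p t ∧ p t ≤ min L_c L_p)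
    (C : ℝ)
    (c : EuclideanSpace ℝ (Fin d) → ℝ)
    (hc : ∀ x, c x = ∫ t in (l x)..(l x + 𝒞), g (t - l x) * p t)
    (Yhat : EuclideanSpace ℝ (Fin d) → ℝ)
    (hY : ∀ x, Yhat x = ∫ t in (C + 𝒞)..(l x + 𝒞), p t) :
    ∀ x₁ x₂, |c x₁ - c x₂| ≤ M_c * ‖x₁ - x₂‖ ∧
      |Yhat x₁ - Yhat x₂| ≤ M_p * ‖x₁ - x₂‖ :=
  randomized_classifier_IF_wrt_BRC_and_outcome_general d l hl_diff C_l hCl hl_grad lam hlam g hg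
    hg_mono hg0 𝒞 h𝒞 hg𝒞 C_g M_c M_p L_c hLc L_p hLp p hp_cont hp C c hc Yhat hY
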